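/- arXiv:1904.07764 — 2 statements merged into one kernel-verified Lean document; each statement's English description precedes it below -/
import Mathlib

section
/- Pruning soundness of the PUO strategy: if SWU(t) < δ · u(D), then for every super-sequence t' of t, u(t') < δ · u(D), i.e., no extension of t can be a high-utility sequential pattern. -/
open scoped BigOperators

/-- A q-item: an item (ℕ) together with its utility (ℝ). -/
abbrev QItem := ℕ × ℝ
/-- An element of a q-sequence: a finite collection of q-items. -/
abbrev QElem := List QItem
/-- A q-sequence: a list of elements. -/
abbrev QSeq := List QElem
/-- A quantitative sequential database: a finite list of q-sequences. -/
abbrev QDB := List QSeq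
/-- A (pattern) sequence: a list of itemsets. -/
abbrev Pattern := List (Finset ℕ)

def qElemUtil (e : QElem) : ℝ := (e.map Prod.snd).sum
def qSeqUtil (s : QSeq) : ℝ := (s.map qElemUtil).sum
def dbUtil (D : QDB) : ℝ := (D.map qSeqUtil).sum
def qElemItems (e : QElem) : Finset ℕ := (e.map Prod.fst).toFinset
def qSeqLen (s : QSeq) : ℕ := (s.map List.length).sum

def NonnegSeq (s : QSeq) : Prop := ∀ e ∈ s, ∀ p ∈ e, 0 ≤ p.2
def NonnegDB (D : QDB) : Prop := ∀ s ∈ D, NonnegSeq s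

/-- Utility of the q-items of element `e` matched by itemset `X`. -/
def matchedUtil (X : Finset ℕ) (e : QElem) : ℝ :=
  ((e.filter (fun p => decide (p.1 ∈ X))).map Prod.snd).sum

/-- `φ` is an (order-preserving) match of pattern `t` in q-sequence `s`. -/
def IsMatch (t : Pattern) (s : QSeq) (φ : Fin t.length → Fin s.length) : Prop :=
  StrictMono φ ∧ ∀ i : Fin t.length, t.get i ⊆ qElemItems (s.get (φ i))

/-- `t ⊆ s`: the pattern `t` is contained in the q-sequence `s`. -/
def Contains (t : Pattern) (s : QSeq) : Prop := ∃ φ, IsMatch t s φ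

/-- Total utility of the q-items matched by the match `φ`. -/
def matchUtil (t : Pattern) (s : QSeq) (φ : Fin t.length → Fin s.length) : ℝ :=
  ∑ i, matchedUtil (t.get i) (s.get (φ i))

/-- `u(t,s)`: the maximum utility over all matches of `t` in `s`. -/
noncomputable def patUtilIn (t : Pattern) (s : QSeq) : ℝ :=
  sSup {v | ∃ φ, IsMatch t s φ ∧ matchUtil t s φ = v}

/-- The pivot (last used element position) of a match. -/
def pivot (t : Pattern) (s : QSeq) (φ : Fin t.length → Fin s.length) : ℕ :=
  Finset.univ.sup (fun i => (φ i : ℕ))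

/-- Pivot position of the first (leftmost) match of `t` in `s`. -/
noncomputable def firstPivot (t : Pattern) (s : QSeq) : ℕ :=
  sInf {p | ∃ φ, IsMatch t s φ ∧ pivot t s φ = p}

/-- Remaining utility of `s` strictly after position `p`. -/
def restUtil (s : QSeq) (p : ℕ) : ℝ := qSeqUtil (s.drop (p + 1))

/-- `u(⟨s − t⟩_rest)`: utility of the part of `s` after the first match of `t`. -/
noncomputable def restAfterFirst (t : Pattern) (s : QSeq) : ℝ :=
  restUtil s (firstPivot t s)

open Classical in
/-- Sequence-weighted utilization of `t` in `D`. -/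
noncomputable def SWU (t : Pattern) (D : QDB) : ℝ :=
  (D.map (fun s => if Contains t s then qSeqUtil s else 0)).sum

open Classical in
/-- `u(t)`: total utility of `t` in the database `D`. -/
noncomputable def patUtil (t : Pattern) (D : QDB) : ℝ :=
  (D.map (fun s => if Contains t s then patUtilIn t s else 0)).sum

open Classical in
/-- Sequence extension utility of `t` in `D`. -/
noncomputable def SEU (t : Pattern) (D : QDB) : ℝ :=
  (D.map (fun s => if Contains t s then patUtilIn t s + restAfterFirst t s else 0)).sum

/-- `t` is a subsequence of `t'`. -/
def Subseq (t t' : Pattern) : Prop :=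
  ∃ φ : Fin t.length → Fin t'.length, StrictMono φ ∧ ∀ i, t.get i ⊆ t'.get (φ i)

/-- I-Concatenation: insert item `i` into the last itemset of `t`. -/
def IConcat (t : Pattern) (i : ℕ) : Pattern :=
  match t with
  | [] => [{i}]
  | [e] => [insert i e]
  | e :: rest => e :: IConcat rest i

/-- S-Concatenation: append the singleton itemset `{i}` at the end of `t`. -/
def SConcat (t : Pattern) (i : ℕ) : Pattern := t ++ [{i}]

/-- Length of a pattern: total number of items. -/
def patLength (t : Pattern) : ℕ := (t.map Finset.card).sum
/-- Size of a pattern: number of itemsets. -/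
def patSize (t : Pattern) : ℕ := t.length

lemma matchedUtil_le (X : Finset ℕ) (e : QElem) (he : ∀ p ∈ e, 0 ≤ p.2) :
    matchedUtil X e ≤ qElemUtil e := by
  induction e with
  | nil => simp [matchedUtil, qElemUtil]
  | cons a l ih =>
    have ha := he a (by simp)
    have ih' := ih (fun p hp => he p (by simp [hp]))
    by_cases hmem : a.1 ∈ X
    · simp [matchedUtil, qElemUtil, hmem] at *
      linarith
    · simp [matchedUtil, qElemUtil, hmem] at *
      linarith

lemma qElemUtil_nonneg (e : QElem) (he : ∀ p ∈ e, 0 ≤ p.2) : 0 ≤ qElemUtil e := by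
  unfold qElemUtil
  apply List.sum_nonneg
  intro x hx
  obtain ⟨p, hp, rfl⟩ := List.mem_map.1 hx
  exact he p hp

lemma qSeqUtil_nonneg (s : QSeq) (hs : NonnegSeq s) : 0 ≤ qSeqUtil s := by
  unfold qSeqUtil
  apply List.sum_nonneg
  intro x hx
  obtain ⟨e, he, rfl⟩ := List.mem_map.1 hx
  exact qElemUtil_nonneg e (hs e he)

lemma matchUtil_le (t : Pattern) (s : QSeq) (φ : Fin t.length → Fin s.length)
    (hφ : StrictMono φ) (hs : NonnegSeq s) : matchUtil t s φ ≤ qSeqUtil s := by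
  have h1 : matchUtil t s φ ≤ ∑ i, qElemUtil (s.get (φ i)) := by
    apply Finset.sum_le_sum
    intro i _
    exact matchedUtil_le _ _ (hs _ (s.get_mem (φ i)))
  have h2 : ∑ i, qElemUtil (s.get (φ i)) = ∑ j ∈ Finset.image φ Finset.univ,
      qElemUtil (s.get j) := by
    rw [Finset.sum_image (fun a _ b _ hab => hφ.injective hab)]
  have h3 : ∑ j ∈ Finset.image φ Finset.univ, qElemUtil (s.get j)
      ≤ ∑ j : Fin s.length, qElemUtil (s.get j) := by
    apply Finset.sum_le_sum_of_subset_of_nonneg (Finset.subset_univ _)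
    intro j _ _
    exact qElemUtil_nonneg _ (hs _ (s.get_mem j))
  have h4 : ∑ j : Fin s.length, qElemUtil (s.get j) = qSeqUtil s := by
    unfold qSeqUtil
    conv_rhs => rw [← List.ofFn_get s]
    rw [List.map_ofFn, List.sum_ofFn]
    rfl
  calc matchUtil t s φ ≤ _ := h1
    _ = _ := h2
    _ ≤ _ := h3
    _ = qSeqUtil s := h4

lemma patUtilIn_le (t : Pattern) (s : QSeq) (hc : Contains t s) (hs : NonnegSeq s) :
    patUtilIn t s ≤ qSeqUtil s := by
  apply Real.sSup_le
  · rintro v ⟨φ, hφ, rfl⟩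
    exact matchUtil_le t s φ hφ.1 hs
  · exact qSeqUtil_nonneg s hs

lemma contains_of_subseq {t t' : Pattern} (hsub : Subseq t t') {s : QSeq}
    (hc : Contains t' s) : Contains t s := by
  obtain ⟨φ, hφmono, hφsub⟩ := hsub
  obtain ⟨ψ, hψmono, hψsub⟩ := hc
  exact ⟨ψ ∘ φ, hψmono.comp hφmono, fun i => (hφsub i).trans (hψsub (φ i))⟩

/-- Soundness of the PUO pruning strategy: if `SWU(t) < δ·u(D)`
then no super-sequence `t'` of `t` can be a high-utility sequential pattern. -/
theorem stmt7 (D : QDB) (hD : NonnegDB D) (δ : ℝ) (hδ0 : 0 < δ) (hδ1 : δ ≤ 1)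
    (t : Pattern) (h : SWU t D < δ * dbUtil D) :
    ∀ t' : Pattern, Subseq t t' → patUtil t' D < δ * dbUtil D := by
  intro t' hsub
  have h1 : patUtil t' D ≤ SWU t' D := by
    unfold patUtil SWU
    apply List.sum_le_sum
    intro s hs
    by_cases hc : Contains t' s
    · simp only [hc, if_true]
      exact patUtilIn_le t' s hc (hD s hs)
    · simp [hc]
  have h2 : SWU t' D ≤ SWU t D := by
    unfold SWU
    apply List.sum_le_sum
    intro s hs
    by_cases hc : Contains t' s
    · simp only [hc, if_true, contains_of_subseq hsub hc]
      simp
    · simp only [hc, if_false]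
      by_cases hc2 : Contains t s
      · simp only [hc2, if_true]
        exact qSeqUtil_nonneg s (hD s hs)
      · simp [hc2]
  linarith
end

section
/- Completeness of concatenation enumeration: every nonempty sequence can be obtained from some single-item sequence by a finite series of I-Concatenations and S-Concatenations, where each I-Concatenation adds an item alphabetically greater than all items in the current last itemset. -/
open scoped BigOperators

/-- One ordered concatenation step: S-Concatenation with any item, or
I-Concatenation with an item alphabetically greater than all items of the
current last itemset. -/
def OrdConcatStep (t t' : Pattern) : Prop :=
  ∃ i : ℕ, t' = SConcat t i ∨
    (t' = IConcat t i ∧ ∀ ht : t ≠ [], ∀ j ∈ t.getLast ht, j < i)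

/-!
Build the pattern itemset by itemset: each itemset is opened by an S-Concatenation with its
least item, and its remaining items are then added by I-Concatenations in increasing order,
so each one exceeds everything already in the last itemset.
-/

lemma IConcat_append_singleton (s : Pattern) (X : Finset ℕ) (i : ℕ) :
    IConcat (s ++ [X]) i = s ++ [insert i X] := by
  induction s with
  | nil => simp [IConcat]
  | cons Y s ih =>
    obtain ⟨Z, l, hZ⟩ := List.exists_cons_of_ne_nil (show s ++ [X] ≠ [] by simp)
    rw [List.cons_append, hZ]
    simp only [IConcat]
    rw [← hZ, ih, List.cons_append]

lemma ordConcatStep_append_insert {s : Pattern} {X : Finset ℕ} {a : ℕ} (h : ∀ j ∈ X, j < a) :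
    OrdConcatStep (s ++ [X]) (s ++ [insert a X]) :=
  ⟨a, Or.inr ⟨(IConcat_append_singleton s X a).symm, fun _ j hj => h j (by simpa using hj)⟩⟩

lemma reflTransGen_append_insert (s : Pattern) (Y : Finset ℕ) {a : ℕ} (h : ∀ y ∈ Y, a < y) :
    Relation.ReflTransGen OrdConcatStep (s ++ [{a}]) (s ++ [insert a Y]) := by
  induction Y using Finset.induction_on_max with
  | empty => rfl
  | insert b Y hYb ih =>
    have hab : a < b := h b (Finset.mem_insert_self b Y)
    refine (ih fun y hy => h y (Finset.mem_insert_of_mem hy)).tail ?_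
    rw [Finset.insert_comm a b]
    refine ordConcatStep_append_insert fun j hj => ?_
    rcases Finset.mem_insert.mp hj with rfl | hjY
    exacts [hab, hYb j hjY]

lemma reflTransGen_append_min' (s : Pattern) {X : Finset ℕ} (hX : X.Nonempty) :
    Relation.ReflTransGen OrdConcatStep (s ++ [{X.min' hX}]) (s ++ [X]) := by
  have hmin : ∀ y ∈ X.erase (X.min' hX), X.min' hX < y := fun y hy =>
    lt_of_le_of_ne (X.min'_le y (Finset.mem_of_mem_erase hy)) (Finset.ne_of_mem_erase hy).symm
  simpa [Finset.insert_erase (X.min'_mem hX)] using reflTransGen_append_insert s _ hmin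

/-- completeness of concatenation enumeration: every nonempty
sequence (of nonempty itemsets) is obtained from some single-item sequence by a
finite series of ordered I- and S-Concatenations. -/
theorem stmt17 (t : Pattern) (ht : t ≠ []) (hne : ∀ X ∈ t, X.Nonempty) :
    ∃ i : ℕ, Relation.ReflTransGen OrdConcatStep [{i}] t := by
  induction t using List.reverseRecOn with
  | nil => exact absurd rfl ht
  | append_singleton s X ih =>
    have hX : X.Nonempty := hne X (by simp)
    by_cases hs : s = []
    · subst hs
      exact ⟨X.min' hX, reflTransGen_append_min' [] hX⟩
    · obtain ⟨i, hi⟩ := ih hs fun Y hY => hne Y (List.mem_append_left _ hY)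
      exact ⟨i, (hi.tail ⟨X.min' hX, Or.inl rfl⟩).trans (reflTransGen_append_min' s hX)⟩
end
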